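/- arXiv:1910.12119 — 3 statements merged into one kernel-verified Lean document; each statement's English description precedes it below -/
import Mathlib

section
/- Fix real numbers λ₁ ≠ λ₂. Let the group ℝ × ℝˣ act on (ℝ \ {0}) × (ℝ \ {0}) by (σ, κ)·(a, b) = (κe^{-λ₁σ}a, κe^{-λ₂σ}b). Then this action has exactly two orbits, distinguished by the sign of the product ab; i.e., (a,b) and (a',b') lie in the same orbit if and only if ab and a'b' have the same sign. -/
/-!
The product `ab` is multiplied by `κ²e^{-(λ₁+λ₂)σ} > 0`, so its sign is an invariant.
Conversely, when the signs agree the ratios `r = a'/a` and `s = b'/b` have `rs > 0`; since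
`λ₁ ≠ λ₂`, the translation `σ` can be chosen with `e^{(λ₁-λ₂)σ} = s/r`, after which the
scaling `κ = re^{λ₁σ}` carries `(a, b)` to `(a', b')`.
-/

open Real

lemma div_pos_iff_pos_iff {K : Type*} [Field K] [LinearOrder K] [IsStrictOrderedRing K]
    {x y : K} (hx : x ≠ 0) (hy : y ≠ 0) : 0 < x / y ↔ (0 < x ↔ 0 < y) := by
  rw [div_pos_iff]
  grind

lemma pos_mul_exp_mul_mul_exp_mul_iff {κ : ℝ} (hκ : κ ≠ 0) (s t a b : ℝ) :
    0 < κ * exp s * a * (κ * exp t * b) ↔ 0 < a * b := by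
  have hfactor : κ * exp s * a * (κ * exp t * b) = κ ^ 2 * exp (s + t) * (a * b) := by
    rw [exp_add]; ring
  rw [hfactor, mul_pos_iff_of_pos_left (by positivity)]

lemma exists_eq_mul_exp_of_mul_pos {l₁ l₂ : ℝ} (hl : l₁ ≠ l₂) {r s : ℝ} (hrs : 0 < r * s) :
    ∃ σ κ : ℝ, κ ≠ 0 ∧ r = κ * exp (-l₁ * σ) ∧ s = κ * exp (-l₂ * σ) := by
  have hr : r ≠ 0 := left_ne_zero_of_mul hrs.ne'
  have hsr : 0 < s / r := by
    rw [← mul_div_mul_left s r hr]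
    exact div_pos hrs (mul_self_pos.mpr hr)
  set σ := log (s / r) / (l₁ - l₂)
  have hσ : exp (l₁ * σ - l₂ * σ) = s / r := by
    rw [← sub_mul, mul_div_cancel₀ _ (sub_ne_zero.mpr hl), exp_log hsr]
  refine ⟨σ, r * exp (l₁ * σ), mul_ne_zero hr (exp_ne_zero _), ?_, ?_⟩
  · rw [mul_assoc, ← exp_add, neg_mul, add_neg_cancel, exp_zero, mul_one]
  · rw [mul_assoc, ← exp_add, neg_mul, ← sub_eq_add_neg, hσ, mul_div_cancel₀ _ hr]

/-- For `λ₁ ≠ λ₂`, the action of `ℝ × ℝˣ` on `(ℝ∖{0})²` by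
`(σ, κ)·(a, b) = (κe^{-λ₁σ}a, κe^{-λ₂σ}b)` has exactly two orbits, distinguished by
the sign of `ab`: two pairs lie in the same orbit iff their products have the same
sign. -/
theorem two_orbits_rescaling_translation (l₁ l₂ : ℝ) (hl : l₁ ≠ l₂)
    (a b a' b' : ℝ) (ha : a ≠ 0) (hb : b ≠ 0) (ha' : a' ≠ 0) (hb' : b' ≠ 0) :
    (∃ σ κ : ℝ, κ ≠ 0 ∧
        a' = κ * Real.exp (-l₁ * σ) * a ∧ b' = κ * Real.exp (-l₂ * σ) * b)
      ↔ (0 < a * b ↔ 0 < a' * b') := by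
  constructor
  · rintro ⟨σ, κ, hκ, rfl, rfl⟩
    exact (pos_mul_exp_mul_mul_exp_mul_iff hκ _ _ a b).symm
  · intro hsign
    have hratios : 0 < a' / a * (b' / b) := by
      rw [div_mul_div_comm, div_pos_iff_pos_iff (mul_ne_zero ha' hb') (mul_ne_zero ha hb)]
      exact hsign.symm
    obtain ⟨σ, κ, hκ, hr, hs⟩ := exists_eq_mul_exp_of_mul_pos hl hratios
    exact ⟨σ, κ, hκ, by rw [← hr, div_mul_cancel₀ _ ha], by rw [← hs, div_mul_cancel₀ _ hb]⟩
end

section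
/- Let C_o, C_s, C_u be F_2-vector spaces and suppose given F_2-linear maps d_oo : C_o → C_o, d_os : C_s → C_o, d_uo : C_o → C_u, d_us : C_s → C_u, and d∂_ss : C_s → C_s, d∂_su : C_u → C_s, d∂_us : C_s → C_u, d∂_uu : C_u → C_u, satisfying: (i) d_oo² + d_os d∂_su d_uo = 0; (ii) d_oo d_os + d_os d∂_ss + d_os d∂_su d_us = 0; (iii) d_uo d_oo + d∂_uu d_uo + d_us d∂_su d_uo = 0; (iv) d∂_us + d_uo d_os + d∂_uu d_us + d_us d∂_ss + d_us d∂_su d_us = 0; (v) d∂_ss² + d∂_su d∂_us = 0; (vi) d∂_ss d∂_su + d∂_su d∂_uu = 0; (vii) d∂_us d∂_ss + d∂_uu d∂_us = 0; (viii) d∂_us d∂_su + d∂_uu² = 0. Then the operator ď on C_o ⊕ C_s given in block form by ď = [[d_oo, d_os],[d∂_su d_uo, d∂_ss + d∂_su d_us]] satisfies ď² = 0, and the operator d̂ on C_o ⊕ C_u given by d̂ = [[d_oo, d_os d∂_su],[d_uo, d∂_uu + d_us d∂_su]] satisfies d̂² = 0. -/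
/-!
Multiplying out the blocks, every entry of `ď²` and `d̂²` is one of the relations (i)–(iv),
possibly composed with `d∂_su` (on the left for `ď`, on the right for `d̂`). To see this, use
(v), (vi), (viii) over `𝔽₂` to trade `d∂_ss²`, `d∂_ss d∂_su` and `d∂_uu²` for `d∂_su d∂_us`,
`d∂_su d∂_uu` and `d∂_us d∂_su`.
-/

open LinearMap

theorem ZModModule.eq_of_add_eq_zero {G : Type*} [AddCommGroup G] [Module (ZMod 2) G] {x y : G}
    (h : x + y = 0) : x = y :=
  sub_eq_zero.mp ((sub_eq_add x y).trans h)

section BlockOperators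

variable {R : Type*} [Semiring R] {M₁ M₂ M₃ N₁ N₂ N₃ : Type*}
  [AddCommMonoid M₁] [AddCommMonoid M₂] [AddCommMonoid M₃]
  [AddCommMonoid N₁] [AddCommMonoid N₂] [AddCommMonoid N₃]
  [Module R M₁] [Module R M₂] [Module R M₃] [Module R N₁] [Module R N₂] [Module R N₃]

theorem LinearMap.prod_coprod_comp_prod_coprod
    (a : M₂ →ₗ[R] M₁) (b : N₂ →ₗ[R] M₁) (c : M₂ →ₗ[R] N₁) (d : N₂ →ₗ[R] N₁)
    (a' : M₃ →ₗ[R] M₂) (b' : N₃ →ₗ[R] M₂) (c' : M₃ →ₗ[R] N₂) (d' : N₃ →ₗ[R] N₂) :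
    (a.coprod b).prod (c.coprod d) ∘ₗ (a'.coprod b').prod (c'.coprod d') =
      ((a ∘ₗ a' + b ∘ₗ c').coprod (a ∘ₗ b' + b ∘ₗ d')).prod
        ((c ∘ₗ a' + d ∘ₗ c').coprod (c ∘ₗ b' + d ∘ₗ d')) := by
  ext <;> simp

theorem LinearMap.prod_coprod_comp_self_eq_zero
    {a : M₁ →ₗ[R] M₁} {b : N₁ →ₗ[R] M₁} {c : M₁ →ₗ[R] N₁} {d : N₁ →ₗ[R] N₁}
    (h₁₁ : a ∘ₗ a + b ∘ₗ c = 0) (h₁₂ : a ∘ₗ b + b ∘ₗ d = 0)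
    (h₂₁ : c ∘ₗ a + d ∘ₗ c = 0) (h₂₂ : c ∘ₗ b + d ∘ₗ d = 0) :
    (a.coprod b).prod (c.coprod d) ∘ₗ (a.coprod b).prod (c.coprod d) = 0 := by
  rw [prod_coprod_comp_prod_coprod, h₁₁, h₁₂, h₂₁, h₂₂]
  ext <;> simp

end BlockOperators

section BlockEntries

variable {R : Type*} [Semiring R] {Co Cs Cu : Type*}
  [AddCommMonoid Co] [Module R Co] [AddCommMonoid Cs] [Module R Cs]
  [AddCommMonoid Cu] [Module R Cu]
  {doo : Co →ₗ[R] Co} {dos : Cs →ₗ[R] Co} {duo : Co →ₗ[R] Cu} {dus : Cs →ₗ[R] Cu}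
  {bss : Cs →ₗ[R] Cs} {bsu : Cu →ₗ[R] Cs} {bus : Cs →ₗ[R] Cu} {buu : Cu →ₗ[R] Cu}

theorem check_sq_lowerLeft (h6 : bss ∘ₗ bsu = bsu ∘ₗ buu)
    (h3 : duo ∘ₗ doo + buu ∘ₗ duo + dus ∘ₗ bsu ∘ₗ duo = 0) :
    (bsu ∘ₗ duo) ∘ₗ doo + (bss + bsu ∘ₗ dus) ∘ₗ bsu ∘ₗ duo = 0 :=
  calc _ = bsu ∘ₗ (duo ∘ₗ doo + buu ∘ₗ duo + dus ∘ₗ bsu ∘ₗ duo) := by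
          simp only [comp_add, add_comp, ← comp_assoc, h6]; abel
    _ = 0 := by rw [h3, comp_zero]

theorem check_sq_lowerRight (h5 : bss ∘ₗ bss = bsu ∘ₗ bus) (h6 : bss ∘ₗ bsu = bsu ∘ₗ buu)
    (h4 : bus + duo ∘ₗ dos + buu ∘ₗ dus + dus ∘ₗ bss + dus ∘ₗ bsu ∘ₗ dus = 0) :
    (bsu ∘ₗ duo) ∘ₗ dos + (bss + bsu ∘ₗ dus) ∘ₗ (bss + bsu ∘ₗ dus) = 0 :=
  calc _ = bsu ∘ₗ (bus + duo ∘ₗ dos + buu ∘ₗ dus + dus ∘ₗ bss + dus ∘ₗ bsu ∘ₗ dus) := by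
          simp only [comp_add, add_comp, ← comp_assoc, h5, h6]; abel
    _ = 0 := by rw [h4, comp_zero]

theorem hat_sq_upperRight (h6 : bss ∘ₗ bsu = bsu ∘ₗ buu)
    (h2 : doo ∘ₗ dos + dos ∘ₗ bss + dos ∘ₗ bsu ∘ₗ dus = 0) :
    doo ∘ₗ (dos ∘ₗ bsu) + (dos ∘ₗ bsu) ∘ₗ (buu + dus ∘ₗ bsu) = 0 :=
  calc _ = (doo ∘ₗ dos + dos ∘ₗ bss + dos ∘ₗ bsu ∘ₗ dus) ∘ₗ bsu := by
          simp only [comp_add, add_comp, comp_assoc, h6]; abel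
    _ = 0 := by rw [h2, zero_comp]

theorem hat_sq_lowerRight (h6 : bss ∘ₗ bsu = bsu ∘ₗ buu) (h8 : buu ∘ₗ buu = bus ∘ₗ bsu)
    (h4 : bus + duo ∘ₗ dos + buu ∘ₗ dus + dus ∘ₗ bss + dus ∘ₗ bsu ∘ₗ dus = 0) :
    duo ∘ₗ (dos ∘ₗ bsu) + (buu + dus ∘ₗ bsu) ∘ₗ (buu + dus ∘ₗ bsu) = 0 :=
  calc _ = (bus + duo ∘ₗ dos + buu ∘ₗ dus + dus ∘ₗ bss + dus ∘ₗ bsu ∘ₗ dus) ∘ₗ bsu := by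
          simp only [comp_add, add_comp, comp_assoc, h6, h8]; abel
    _ = 0 := by rw [h4, zero_comp]

end BlockEntries

theorem check_hat_differentials_general {Co Cs Cu : Type*}
    [AddCommGroup Co] [Module (ZMod 2) Co]
    [AddCommGroup Cs] [Module (ZMod 2) Cs]
    [AddCommGroup Cu] [Module (ZMod 2) Cu]
    (doo : Co →ₗ[ZMod 2] Co) (dos : Cs →ₗ[ZMod 2] Co)
    (duo : Co →ₗ[ZMod 2] Cu) (dus : Cs →ₗ[ZMod 2] Cu)
    (bss : Cs →ₗ[ZMod 2] Cs) (bsu : Cu →ₗ[ZMod 2] Cs)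
    (bus : Cs →ₗ[ZMod 2] Cu) (buu : Cu →ₗ[ZMod 2] Cu)
    (h1 : doo ∘ₗ doo + dos ∘ₗ bsu ∘ₗ duo = 0)
    (h2 : doo ∘ₗ dos + dos ∘ₗ bss + dos ∘ₗ bsu ∘ₗ dus = 0)
    (h3 : duo ∘ₗ doo + buu ∘ₗ duo + dus ∘ₗ bsu ∘ₗ duo = 0)
    (h4 : bus + duo ∘ₗ dos + buu ∘ₗ dus + dus ∘ₗ bss + dus ∘ₗ bsu ∘ₗ dus = 0)
    (h5 : bss ∘ₗ bss + bsu ∘ₗ bus = 0)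
    (h6 : bss ∘ₗ bsu + bsu ∘ₗ buu = 0)
    (h8 : bus ∘ₗ bsu + buu ∘ₗ buu = 0) :
    let dCheck : (Co × Cs) →ₗ[ZMod 2] (Co × Cs) :=
      LinearMap.prod
        (doo ∘ₗ LinearMap.fst (ZMod 2) Co Cs + dos ∘ₗ LinearMap.snd (ZMod 2) Co Cs)
        ((bsu ∘ₗ duo) ∘ₗ LinearMap.fst (ZMod 2) Co Cs +
          (bss + bsu ∘ₗ dus) ∘ₗ LinearMap.snd (ZMod 2) Co Cs)
    let dHat : (Co × Cu) →ₗ[ZMod 2] (Co × Cu) :=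
      LinearMap.prod
        (doo ∘ₗ LinearMap.fst (ZMod 2) Co Cu + (dos ∘ₗ bsu) ∘ₗ LinearMap.snd (ZMod 2) Co Cu)
        (duo ∘ₗ LinearMap.fst (ZMod 2) Co Cu +
          (buu + dus ∘ₗ bsu) ∘ₗ LinearMap.snd (ZMod 2) Co Cu)
    dCheck ∘ₗ dCheck = 0 ∧ dHat ∘ₗ dHat = 0 := by
  have h5' := ZModModule.eq_of_add_eq_zero h5
  have h6' := ZModModule.eq_of_add_eq_zero h6
  have h8' := (ZModModule.eq_of_add_eq_zero h8).symm
  exact ⟨prod_coprod_comp_self_eq_zero h1 (by rwa [comp_add, ← add_assoc])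
      (check_sq_lowerLeft h6' h3) (check_sq_lowerRight h5' h6' h4),
    prod_coprod_comp_self_eq_zero h1 (hat_sq_upperRight h6' h2)
      (by rwa [add_comp, ← add_assoc]) (hat_sq_lowerRight h6' h8' h4)⟩

/-- Given the eight trajectory-counting operators of Morse theory for manifolds with
boundary, satisfying Kronheimer–Mrowka's relations (i)–(viii), the `check` operator
on `C_o ⊕ C_s` and the `hat` operator on `C_o ⊕ C_u` both square to zero. -/
theorem check_hat_differentials {Co Cs Cu : Type*}
    [AddCommGroup Co] [Module (ZMod 2) Co]
    [AddCommGroup Cs] [Module (ZMod 2) Cs]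
    [AddCommGroup Cu] [Module (ZMod 2) Cu]
    (doo : Co →ₗ[ZMod 2] Co) (dos : Cs →ₗ[ZMod 2] Co)
    (duo : Co →ₗ[ZMod 2] Cu) (dus : Cs →ₗ[ZMod 2] Cu)
    (bss : Cs →ₗ[ZMod 2] Cs) (bsu : Cu →ₗ[ZMod 2] Cs)
    (bus : Cs →ₗ[ZMod 2] Cu) (buu : Cu →ₗ[ZMod 2] Cu)
    (h1 : doo ∘ₗ doo + dos ∘ₗ bsu ∘ₗ duo = 0)
    (h2 : doo ∘ₗ dos + dos ∘ₗ bss + dos ∘ₗ bsu ∘ₗ dus = 0)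
    (h3 : duo ∘ₗ doo + buu ∘ₗ duo + dus ∘ₗ bsu ∘ₗ duo = 0)
    (h4 : bus + duo ∘ₗ dos + buu ∘ₗ dus + dus ∘ₗ bss + dus ∘ₗ bsu ∘ₗ dus = 0)
    (h5 : bss ∘ₗ bss + bsu ∘ₗ bus = 0)
    (h6 : bss ∘ₗ bsu + bsu ∘ₗ buu = 0)
    (h7 : bus ∘ₗ bss + buu ∘ₗ bus = 0)
    (h8 : bus ∘ₗ bsu + buu ∘ₗ buu = 0) :
    let dCheck : (Co × Cs) →ₗ[ZMod 2] (Co × Cs) :=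
      LinearMap.prod
        (doo ∘ₗ LinearMap.fst (ZMod 2) Co Cs + dos ∘ₗ LinearMap.snd (ZMod 2) Co Cs)
        ((bsu ∘ₗ duo) ∘ₗ LinearMap.fst (ZMod 2) Co Cs +
          (bss + bsu ∘ₗ dus) ∘ₗ LinearMap.snd (ZMod 2) Co Cs)
    let dHat : (Co × Cu) →ₗ[ZMod 2] (Co × Cu) :=
      LinearMap.prod
        (doo ∘ₗ LinearMap.fst (ZMod 2) Co Cu + (dos ∘ₗ bsu) ∘ₗ LinearMap.snd (ZMod 2) Co Cu)
        (duo ∘ₗ LinearMap.fst (ZMod 2) Co Cu +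
          (buu + dus ∘ₗ bsu) ∘ₗ LinearMap.snd (ZMod 2) Co Cu)
    dCheck ∘ₗ dCheck = 0 ∧ dHat ∘ₗ dHat = 0 :=
  check_hat_differentials_general doo dos duo dus bss bsu bus buu h1 h2 h3 h4 h5 h6 h8
end

section
/- Under the same hypotheses as the eight-operator relations for Morse theory on manifolds with boundary (relations (i)–(viii)), define the chain complexes (Č = C_o ⊕ C_s, ď), (Ĉ = C_o ⊕ C_u, d̂), and (C̄ = C_s ⊕ C_u, d̄ = [[d∂_ss, d∂_su],[d∂_us, d∂_uu]]). Then the maps j* : Ĉ → Č given by the block matrix [[id_{C_o}, 0],[0, d∂_su]], i* : Č → C̄ given by [[0, id_{C_s}],[d_uo, d_us]], and ∂ : C̄ → Ĉ given by [[d_os, 0],[d_us, id_{C_u}]] are all chain maps: ď∘j* = j*∘d̂, d̄∘i* = i*∘ď, and d̂∘∂ = ∂∘d̄. -/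
/-!
Over `𝔽₂` signs disappear, so `x + y = 0` is the same as `x = y`. Compared block by block,
each of the three chain-map identities is then either trivial or one of the relations
(ii), (iii), (iv) and `d∂_ss d∂_su = d∂_su d∂_uu` with some terms moved across the equal sign.
-/

theorem ZModModule.add_eq_zero_iff_eq {G : Type*} [AddCommGroup G] [Module (ZMod 2) G]
    {x y : G} : x + y = 0 ↔ x = y := by
  rw [add_eq_zero_iff_eq_neg, ZModModule.neg_eq_self]

namespace MorseBoundary

open LinearMap ZModModule

variable {Co Cs Cu : Type*}
  [AddCommGroup Co] [Module (ZMod 2) Co]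
  [AddCommGroup Cs] [Module (ZMod 2) Cs]
  [AddCommGroup Cu] [Module (ZMod 2) Cu]
  (doo : Co →ₗ[ZMod 2] Co) (dos : Cs →ₗ[ZMod 2] Co)
  (duo : Co →ₗ[ZMod 2] Cu) (dus : Cs →ₗ[ZMod 2] Cu)
  (bss : Cs →ₗ[ZMod 2] Cs) (bsu : Cu →ₗ[ZMod 2] Cs)
  (bus : Cs →ₗ[ZMod 2] Cu) (buu : Cu →ₗ[ZMod 2] Cu)

def checkDiff : (Co × Cs) →ₗ[ZMod 2] (Co × Cs) :=
  prod (doo ∘ₗ fst (ZMod 2) Co Cs + dos ∘ₗ snd (ZMod 2) Co Cs)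
    ((bsu ∘ₗ duo) ∘ₗ fst (ZMod 2) Co Cs + (bss + bsu ∘ₗ dus) ∘ₗ snd (ZMod 2) Co Cs)

def hatDiff : (Co × Cu) →ₗ[ZMod 2] (Co × Cu) :=
  prod (doo ∘ₗ fst (ZMod 2) Co Cu + (dos ∘ₗ bsu) ∘ₗ snd (ZMod 2) Co Cu)
    (duo ∘ₗ fst (ZMod 2) Co Cu + (buu + dus ∘ₗ bsu) ∘ₗ snd (ZMod 2) Co Cu)

def barDiff : (Cs × Cu) →ₗ[ZMod 2] (Cs × Cu) :=
  prod (bss ∘ₗ fst (ZMod 2) Cs Cu + bsu ∘ₗ snd (ZMod 2) Cs Cu)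
    (bus ∘ₗ fst (ZMod 2) Cs Cu + buu ∘ₗ snd (ZMod 2) Cs Cu)

def jStar : (Co × Cu) →ₗ[ZMod 2] (Co × Cs) :=
  prod (fst (ZMod 2) Co Cu) (bsu ∘ₗ snd (ZMod 2) Co Cu)

def iStar : (Co × Cs) →ₗ[ZMod 2] (Cs × Cu) :=
  prod (snd (ZMod 2) Co Cs) (duo ∘ₗ fst (ZMod 2) Co Cs + dus ∘ₗ snd (ZMod 2) Co Cs)

def boundaryMap : (Cs × Cu) →ₗ[ZMod 2] (Co × Cu) :=
  prod (dos ∘ₗ fst (ZMod 2) Cs Cu) (dus ∘ₗ fst (ZMod 2) Cs Cu + snd (ZMod 2) Cs Cu)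

theorem checkDiff_comp_jStar (h6 : bss ∘ₗ bsu + bsu ∘ₗ buu = 0) :
    checkDiff doo dos duo dus bss bsu ∘ₗ jStar bsu =
      jStar bsu ∘ₗ hatDiff doo dos duo dus bsu buu := by
  have e6 : bss ∘ₗ bsu = bsu ∘ₗ buu := add_eq_zero_iff_eq.mp h6
  ext x <;> simp only [checkDiff, jStar, hatDiff, coe_comp, coe_inl, coe_inr, Function.comp_apply,
    LinearMap.prod_apply, coe_fst, coe_snd, Function.prod_apply, LinearMap.add_apply, map_zero,
    map_add, add_zero, zero_add, add_left_inj]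
  exact LinearMap.congr_fun e6 x

theorem barDiff_comp_iStar (h3 : duo ∘ₗ doo + buu ∘ₗ duo + dus ∘ₗ bsu ∘ₗ duo = 0)
    (h4 : bus + duo ∘ₗ dos + buu ∘ₗ dus + dus ∘ₗ bss + dus ∘ₗ bsu ∘ₗ dus = 0) :
    barDiff bss bsu bus buu ∘ₗ iStar duo dus =
      iStar duo dus ∘ₗ checkDiff doo dos duo dus bss bsu := by
  have e3 : buu ∘ₗ duo = duo ∘ₗ doo + dus ∘ₗ bsu ∘ₗ duo :=
    add_eq_zero_iff_eq.mp (by rw [← h3]; abel)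
  have e4 : bus + buu ∘ₗ dus = duo ∘ₗ dos + (dus ∘ₗ bss + dus ∘ₗ bsu ∘ₗ dus) :=
    add_eq_zero_iff_eq.mp (by rw [← h4]; abel)
  ext x <;> simp only [barDiff, iStar, checkDiff, coe_comp, coe_inl, coe_inr, Function.comp_apply,
    LinearMap.prod_apply, coe_fst, coe_snd, Function.prod_apply, LinearMap.add_apply, map_zero,
    map_add, add_zero, zero_add]
  · exact LinearMap.congr_fun e3 x
  · exact LinearMap.congr_fun e4 x

theorem hatDiff_comp_boundaryMap (h2 : doo ∘ₗ dos + dos ∘ₗ bss + dos ∘ₗ bsu ∘ₗ dus = 0)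
    (h4 : bus + duo ∘ₗ dos + buu ∘ₗ dus + dus ∘ₗ bss + dus ∘ₗ bsu ∘ₗ dus = 0) :
    hatDiff doo dos duo dus bsu buu ∘ₗ boundaryMap dos dus =
      boundaryMap dos dus ∘ₗ barDiff bss bsu bus buu := by
  have e2 : doo ∘ₗ dos + dos ∘ₗ bsu ∘ₗ dus = dos ∘ₗ bss :=
    add_eq_zero_iff_eq.mp (by rw [← h2]; abel)
  have e4 : duo ∘ₗ dos + (buu ∘ₗ dus + dus ∘ₗ bsu ∘ₗ dus) = dus ∘ₗ bss + bus :=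
    add_eq_zero_iff_eq.mp (by rw [← h4]; abel)
  ext x <;> simp only [hatDiff, boundaryMap, barDiff, coe_comp, coe_inl, coe_inr,
    Function.comp_apply, LinearMap.prod_apply, coe_fst, coe_snd, snd_apply, Function.prod_apply,
    LinearMap.add_apply, map_zero, add_zero, zero_add]
  · exact LinearMap.congr_fun e2 x
  · exact LinearMap.congr_fun e4 x
  · exact add_comm _ _

end MorseBoundary

theorem j_i_boundary_chain_maps_general {Co Cs Cu : Type*}
    [AddCommGroup Co] [Module (ZMod 2) Co]
    [AddCommGroup Cs] [Module (ZMod 2) Cs]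
    [AddCommGroup Cu] [Module (ZMod 2) Cu]
    (doo : Co →ₗ[ZMod 2] Co) (dos : Cs →ₗ[ZMod 2] Co)
    (duo : Co →ₗ[ZMod 2] Cu) (dus : Cs →ₗ[ZMod 2] Cu)
    (bss : Cs →ₗ[ZMod 2] Cs) (bsu : Cu →ₗ[ZMod 2] Cs)
    (bus : Cs →ₗ[ZMod 2] Cu) (buu : Cu →ₗ[ZMod 2] Cu)
    (h2 : doo ∘ₗ dos + dos ∘ₗ bss + dos ∘ₗ bsu ∘ₗ dus = 0)
    (h3 : duo ∘ₗ doo + buu ∘ₗ duo + dus ∘ₗ bsu ∘ₗ duo = 0)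
    (h4 : bus + duo ∘ₗ dos + buu ∘ₗ dus + dus ∘ₗ bss + dus ∘ₗ bsu ∘ₗ dus = 0)
    (h6 : bss ∘ₗ bsu + bsu ∘ₗ buu = 0) :
    let dCheck : (Co × Cs) →ₗ[ZMod 2] (Co × Cs) :=
      LinearMap.prod
        (doo ∘ₗ LinearMap.fst (ZMod 2) Co Cs + dos ∘ₗ LinearMap.snd (ZMod 2) Co Cs)
        ((bsu ∘ₗ duo) ∘ₗ LinearMap.fst (ZMod 2) Co Cs +
          (bss + bsu ∘ₗ dus) ∘ₗ LinearMap.snd (ZMod 2) Co Cs)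
    let dHat : (Co × Cu) →ₗ[ZMod 2] (Co × Cu) :=
      LinearMap.prod
        (doo ∘ₗ LinearMap.fst (ZMod 2) Co Cu + (dos ∘ₗ bsu) ∘ₗ LinearMap.snd (ZMod 2) Co Cu)
        (duo ∘ₗ LinearMap.fst (ZMod 2) Co Cu +
          (buu + dus ∘ₗ bsu) ∘ₗ LinearMap.snd (ZMod 2) Co Cu)
    let dBar : (Cs × Cu) →ₗ[ZMod 2] (Cs × Cu) :=
      LinearMap.prod
        (bss ∘ₗ LinearMap.fst (ZMod 2) Cs Cu + bsu ∘ₗ LinearMap.snd (ZMod 2) Cs Cu)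
        (bus ∘ₗ LinearMap.fst (ZMod 2) Cs Cu + buu ∘ₗ LinearMap.snd (ZMod 2) Cs Cu)
    let jStar : (Co × Cu) →ₗ[ZMod 2] (Co × Cs) :=
      LinearMap.prod (LinearMap.fst (ZMod 2) Co Cu)
        (bsu ∘ₗ LinearMap.snd (ZMod 2) Co Cu)
    let iStar : (Co × Cs) →ₗ[ZMod 2] (Cs × Cu) :=
      LinearMap.prod (LinearMap.snd (ZMod 2) Co Cs)
        (duo ∘ₗ LinearMap.fst (ZMod 2) Co Cs + dus ∘ₗ LinearMap.snd (ZMod 2) Co Cs)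
    let bdry : (Cs × Cu) →ₗ[ZMod 2] (Co × Cu) :=
      LinearMap.prod (dos ∘ₗ LinearMap.fst (ZMod 2) Cs Cu)
        (dus ∘ₗ LinearMap.fst (ZMod 2) Cs Cu + LinearMap.snd (ZMod 2) Cs Cu)
    dCheck ∘ₗ jStar = jStar ∘ₗ dHat ∧
      dBar ∘ₗ iStar = iStar ∘ₗ dCheck ∧
      dHat ∘ₗ bdry = bdry ∘ₗ dBar := by
  intro _ _ _ _ _ _
  exact ⟨MorseBoundary.checkDiff_comp_jStar doo dos duo dus bss bsu buu h6,
    MorseBoundary.barDiff_comp_iStar doo dos duo dus bss bsu bus buu h3 h4,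
    MorseBoundary.hatDiff_comp_boundaryMap doo dos duo dus bss bsu bus buu h2 h4⟩

/-- With the eight trajectory-counting operators satisfying Kronheimer–Mrowka's
relations, the maps `j* = [[id,0],[0,d∂_su]] : Ĉ → Č`, `i* = [[0,id],[d_uo,d_us]] :
Č → C̄` and `∂ = [[d_os,0],[d_us,id]] : C̄ → Ĉ` are chain maps. -/
theorem j_i_boundary_chain_maps {Co Cs Cu : Type*}
    [AddCommGroup Co] [Module (ZMod 2) Co]
    [AddCommGroup Cs] [Module (ZMod 2) Cs]
    [AddCommGroup Cu] [Module (ZMod 2) Cu]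
    (doo : Co →ₗ[ZMod 2] Co) (dos : Cs →ₗ[ZMod 2] Co)
    (duo : Co →ₗ[ZMod 2] Cu) (dus : Cs →ₗ[ZMod 2] Cu)
    (bss : Cs →ₗ[ZMod 2] Cs) (bsu : Cu →ₗ[ZMod 2] Cs)
    (bus : Cs →ₗ[ZMod 2] Cu) (buu : Cu →ₗ[ZMod 2] Cu)
    (h1 : doo ∘ₗ doo + dos ∘ₗ bsu ∘ₗ duo = 0)
    (h2 : doo ∘ₗ dos + dos ∘ₗ bss + dos ∘ₗ bsu ∘ₗ dus = 0)
    (h3 : duo ∘ₗ doo + buu ∘ₗ duo + dus ∘ₗ bsu ∘ₗ duo = 0)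
    (h4 : bus + duo ∘ₗ dos + buu ∘ₗ dus + dus ∘ₗ bss + dus ∘ₗ bsu ∘ₗ dus = 0)
    (h5 : bss ∘ₗ bss + bsu ∘ₗ bus = 0)
    (h6 : bss ∘ₗ bsu + bsu ∘ₗ buu = 0)
    (h7 : bus ∘ₗ bss + buu ∘ₗ bus = 0)
    (h8 : bus ∘ₗ bsu + buu ∘ₗ buu = 0) :
    let dCheck : (Co × Cs) →ₗ[ZMod 2] (Co × Cs) :=
      LinearMap.prod
        (doo ∘ₗ LinearMap.fst (ZMod 2) Co Cs + dos ∘ₗ LinearMap.snd (ZMod 2) Co Cs)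
        ((bsu ∘ₗ duo) ∘ₗ LinearMap.fst (ZMod 2) Co Cs +
          (bss + bsu ∘ₗ dus) ∘ₗ LinearMap.snd (ZMod 2) Co Cs)
    let dHat : (Co × Cu) →ₗ[ZMod 2] (Co × Cu) :=
      LinearMap.prod
        (doo ∘ₗ LinearMap.fst (ZMod 2) Co Cu + (dos ∘ₗ bsu) ∘ₗ LinearMap.snd (ZMod 2) Co Cu)
        (duo ∘ₗ LinearMap.fst (ZMod 2) Co Cu +
          (buu + dus ∘ₗ bsu) ∘ₗ LinearMap.snd (ZMod 2) Co Cu)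
    let dBar : (Cs × Cu) →ₗ[ZMod 2] (Cs × Cu) :=
      LinearMap.prod
        (bss ∘ₗ LinearMap.fst (ZMod 2) Cs Cu + bsu ∘ₗ LinearMap.snd (ZMod 2) Cs Cu)
        (bus ∘ₗ LinearMap.fst (ZMod 2) Cs Cu + buu ∘ₗ LinearMap.snd (ZMod 2) Cs Cu)
    let jStar : (Co × Cu) →ₗ[ZMod 2] (Co × Cs) :=
      LinearMap.prod (LinearMap.fst (ZMod 2) Co Cu)
        (bsu ∘ₗ LinearMap.snd (ZMod 2) Co Cu)
    let iStar : (Co × Cs) →ₗ[ZMod 2] (Cs × Cu) :=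
      LinearMap.prod (LinearMap.snd (ZMod 2) Co Cs)
        (duo ∘ₗ LinearMap.fst (ZMod 2) Co Cs + dus ∘ₗ LinearMap.snd (ZMod 2) Co Cs)
    let bdry : (Cs × Cu) →ₗ[ZMod 2] (Co × Cu) :=
      LinearMap.prod (dos ∘ₗ LinearMap.fst (ZMod 2) Cs Cu)
        (dus ∘ₗ LinearMap.fst (ZMod 2) Cs Cu + LinearMap.snd (ZMod 2) Cs Cu)
    dCheck ∘ₗ jStar = jStar ∘ₗ dHat ∧
      dBar ∘ₗ iStar = iStar ∘ₗ dCheck ∧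
      dHat ∘ₗ bdry = bdry ∘ₗ dBar :=
  j_i_boundary_chain_maps_general doo dos duo dus bss bsu bus buu h2 h3 h4 h6
end
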